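/- Let y₁ and x₂ be real numbers with 0 ≤ y₁ ≤ x₂ ≤ 1 satisfying the strict inequalities 2y₁ < x₂, 1 + y₁ < 2x₂, and 1 − x₂ < y₁, and let J = [0, y₁] ∪ [x₂, 1]. Then μ(J + J) = 3y₁ − 3x₂ + 3 and μ(J − J) = 4y₁ − 2x₂ + 2; consequently μ(J − J) − μ(J + J) = y₁ + x₂ − 1 > 0, so J is difference dominant. -/
import Mathlib


open MeasureTheory
open scoped Pointwise

lemma icc_add_icc (a b c d : ℝ) (hab : a ≤ b) (hcd : c ≤ d) :
    Set.Icc a b + Set.Icc c d = Set.Icc (a + c) (b + d) := by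
  apply Set.Subset.antisymm (Set.Icc_add_Icc_subset a b c d)
  intro x hx
  obtain ⟨hx1, hx2⟩ := hx
  refine ⟨max a (x - d), ⟨le_max_left _ _, ?_⟩, x - max a (x - d), ⟨?_, ?_⟩, by ring⟩
  · rcases max_cases a (x - d) with ⟨h, _⟩ | ⟨h, _⟩ <;> rw [h] <;> linarith
  · rcases max_cases a (x - d) with ⟨h, _⟩ | ⟨h, _⟩ <;> rw [h] <;> linarith
  · rcases max_cases a (x - d) with ⟨h, _⟩ | ⟨h, _⟩ <;> rw [h] <;> linarith

lemma icc_sub_icc (a b c d : ℝ) (hab : a ≤ b) (hcd : c ≤ d) :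
    Set.Icc a b - Set.Icc c d = Set.Icc (a - d) (b - c) := by
  rw [sub_eq_add_neg, Set.neg_Icc, icc_add_icc a b (-d) (-c) hab (by linarith),
    ← sub_eq_add_neg, ← sub_eq_add_neg]

lemma icc_disj (a b c d : ℝ) (h : b < c) : Disjoint (Set.Icc a b) (Set.Icc c d) := by
  rw [Set.disjoint_left]
  rintro x ⟨_, hb⟩ ⟨hc, _⟩
  linarith

theorem region_one_difference_dominant (y₁ x₂ : ℝ)
    (h0 : 0 ≤ y₁) (h1 : y₁ ≤ x₂) (h2 : x₂ ≤ 1)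
    (h3 : 2 * y₁ < x₂) (h4 : 1 + y₁ < 2 * x₂) (h5 : 1 - x₂ < y₁) :
    volume ((Set.Icc 0 y₁ ∪ Set.Icc x₂ 1) + (Set.Icc 0 y₁ ∪ Set.Icc x₂ 1))
      = ENNReal.ofReal (3 * y₁ - 3 * x₂ + 3) ∧
    volume ((Set.Icc 0 y₁ ∪ Set.Icc x₂ 1) - (Set.Icc 0 y₁ ∪ Set.Icc x₂ 1))
      = ENNReal.ofReal (4 * y₁ - 2 * x₂ + 2) ∧
    volume ((Set.Icc 0 y₁ ∪ Set.Icc x₂ 1) - (Set.Icc 0 y₁ ∪ Set.Icc x₂ 1))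
      > volume ((Set.Icc 0 y₁ ∪ Set.Icc x₂ 1) + (Set.Icc 0 y₁ ∪ Set.Icc x₂ 1)) := by
  have hAA : Set.Icc (0:ℝ) y₁ + Set.Icc 0 y₁ = Set.Icc 0 (2 * y₁) := by
    rw [icc_add_icc _ _ _ _ h0 h0]; norm_num; ring
  have hAB : Set.Icc (0:ℝ) y₁ + Set.Icc x₂ 1 = Set.Icc x₂ (1 + y₁) := by
    rw [icc_add_icc _ _ _ _ h0 h2]; norm_num; rw [add_comm]
  have hBA : Set.Icc (x₂:ℝ) 1 + Set.Icc 0 y₁ = Set.Icc x₂ (1 + y₁) := by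
    rw [icc_add_icc _ _ _ _ h2 h0]; norm_num
  have hBB : Set.Icc (x₂:ℝ) 1 + Set.Icc x₂ 1 = Set.Icc (2 * x₂) 2 := by
    rw [icc_add_icc _ _ _ _ h2 h2]; norm_num; ring
  have hsum : (Set.Icc (0:ℝ) y₁ ∪ Set.Icc x₂ 1) + (Set.Icc 0 y₁ ∪ Set.Icc x₂ 1)
      = Set.Icc 0 (2 * y₁) ∪ (Set.Icc x₂ (1 + y₁) ∪ Set.Icc (2 * x₂) 2) := by
    rw [Set.union_add, Set.add_union, Set.add_union, hAA, hAB, hBA, hBB]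
    ext x; simp only [Set.mem_union]; tauto
  have hmA : Set.Icc (0:ℝ) y₁ - Set.Icc 0 y₁ = Set.Icc (-y₁) y₁ := by
    rw [icc_sub_icc _ _ _ _ h0 h0]; norm_num
  have hmAB : Set.Icc (0:ℝ) y₁ - Set.Icc x₂ 1 = Set.Icc (-1) (y₁ - x₂) := by
    rw [icc_sub_icc _ _ _ _ h0 h2]; norm_num
  have hmBA : Set.Icc (x₂:ℝ) 1 - Set.Icc 0 y₁ = Set.Icc (x₂ - y₁) 1 := by
    rw [icc_sub_icc _ _ _ _ h2 h0]; norm_num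
  have hmBB : Set.Icc (x₂:ℝ) 1 - Set.Icc x₂ 1 = Set.Icc (x₂ - 1) (1 - x₂) := by
    rw [icc_sub_icc _ _ _ _ h2 h2]
  have hBBsub : Set.Icc (x₂ - 1) (1 - x₂) ⊆ Set.Icc (-y₁) y₁ :=
    Set.Icc_subset_Icc (by linarith) (by linarith)
  have hdiff : (Set.Icc (0:ℝ) y₁ ∪ Set.Icc x₂ 1) - (Set.Icc 0 y₁ ∪ Set.Icc x₂ 1)
      = Set.Icc (-1) (y₁ - x₂) ∪ (Set.Icc (-y₁) y₁ ∪ Set.Icc (x₂ - y₁) 1) := by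
    rw [Set.union_sub, Set.sub_union, Set.sub_union, hmA, hmAB, hmBA, hmBB]
    ext x
    simp only [Set.mem_union]
    constructor
    · rintro ((h | h) | (h | h))
      exacts [Or.inr (Or.inl h), Or.inl h, Or.inr (Or.inr h), Or.inr (Or.inl (hBBsub h))]
    · rintro (h | (h | h))
      exacts [Or.inl (Or.inr h), Or.inl (Or.inl h), Or.inr (Or.inl h)]
  have key : ∀ (a b c d e f : ℝ), a ≤ b → c ≤ d → e ≤ f → b < c → d < e →
      volume (Set.Icc a b ∪ (Set.Icc c d ∪ Set.Icc e f))
        = ENNReal.ofReal ((b - a) + ((d - c) + (f - e))) := by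
    intro a b c d e f hab hcd hef hbc hde
    have d1 : Disjoint (Set.Icc a b) (Set.Icc c d ∪ Set.Icc e f) :=
      Set.disjoint_union_right.mpr ⟨icc_disj a b c d hbc, icc_disj a b e f (by linarith)⟩
    rw [measure_union d1 (measurableSet_Icc.union measurableSet_Icc),
        measure_union (icc_disj c d e f hde) measurableSet_Icc,
        Real.volume_Icc, Real.volume_Icc, Real.volume_Icc,
        ← ENNReal.ofReal_add (by linarith) (by linarith),
        ← ENNReal.ofReal_add (by linarith) (by linarith)]
  refine ⟨?_, ?_, ?_⟩
  · rw [hsum, key 0 (2 * y₁) x₂ (1 + y₁) (2 * x₂) 2 (by linarith) (by linarith)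
      (by linarith) h3 h4]
    congr 1; ring
  · rw [hdiff, key (-1) (y₁ - x₂) (-y₁) y₁ (x₂ - y₁) 1 (by linarith) (by linarith)
      (by linarith) (by linarith) (by linarith)]
    congr 1; ring
  · rw [hsum, hdiff, key 0 (2 * y₁) x₂ (1 + y₁) (2 * x₂) 2 (by linarith) (by linarith)
      (by linarith) h3 h4, key (-1) (y₁ - x₂) (-y₁) y₁ (x₂ - y₁) 1 (by linarith)
      (by linarith) (by linarith) (by linarith) (by linarith)]
    exact (ENNReal.ofReal_lt_ofReal_iff_of_nonneg (by linarith)).mpr (by linarith)
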